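/- Let G=(V,E) be a DAG, let u,v be distinct vertices and W ⊆ V∖{u,v}, and let π be a path between u and v that d-connects u and v given W (every collider on π is an ancestor of some element of W and every non-collider on π is not in W). If x is a non-collider on π (so x ∉ W and x ∉ {u,v}), then x ∈ an(G, W∪{u,v}), i.e., x is an ancestor in G of u, of v, or of some element of W. -/

import Mathlib

/-! Basic graphical-model definitions: DAGs as binary relations on a finite
vertex type, d-separation via paths (lists of vertices), Markov equivalence,
and definite (non-)ancestral relations. -/

variable {V : Type*}

/-- Two nodes are adjacent in the digraph `E` if there is an edge between them
in either direction. -/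
def Adjacent (E : V → V → Prop) (a b : V) : Prop := E a b ∨ E b a

/-- A digraph is acyclic if it has no directed cycles. -/
def Acyclic (E : V → V → Prop) : Prop := ∀ v : V, ¬ Relation.TransGen E v v

/-- `u` is an ancestor of `v`: there is a directed path from `u` to `v`
(by convention, `v` is an ancestor of itself). -/
def Anc (E : V → V → Prop) (u v : V) : Prop := Relation.ReflTransGen E u v

/-- A list of vertices is a path in the skeleton of `E`: consecutive vertices
are adjacent and no vertex repeats. -/
def IsPath (E : V → V → Prop) (p : List V) : Prop :=
  p.Nodup ∧ List.Chain' (Adjacent E) p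

/-- A path `p` is d-connecting given the conditioning set `C` if every collider
on it is an ancestor of an element of `C` and every non-collider on it is
outside `C`.  Interior vertices of `p` are exactly the middle elements `x` of
consecutive triples `[a, x, b]` of `p`; such an `x` is a collider when both
incident edges point into it. -/
def IsDConnectingPath (E : V → V → Prop) (C : Set V) (p : List V) : Prop :=
  ∀ a x b : V, [a, x, b] <:+: p →
    ((E a x ∧ E b x) → ∃ c ∈ C, Anc E x c) ∧ (¬ (E a x ∧ E b x) → x ∉ C)

/-- `u` and `v` are d-connected given `C` in `E`. -/
def DConn (E : V → V → Prop) (C : Set V) (u v : V) : Prop :=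
  ∃ p : List V, IsPath E p ∧ p.head? = some u ∧ p.getLast? = some v ∧
    IsDConnectingPath E C p

/-- `u` and `v` are d-separated given `C` in `E`. -/
def DSep (E : V → V → Prop) (C : Set V) (u v : V) : Prop := ¬ DConn E C u v

/-- Two DAGs on the same vertex set are Markov equivalent if they have exactly
the same d-separation relations. -/
def MarkovEquiv (E E' : V → V → Prop) : Prop :=
  ∀ (u v : V) (C : Set V), u ≠ v → u ∉ C → v ∉ C → (DSep E C u v ↔ DSep E' C u v)

/-- `u` is definite ancestral to `v` (`u ⇝ v`): `u` is an ancestor of `v` in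
every DAG Markov equivalent to `E`. -/
def DefAnc (E : V → V → Prop) (u v : V) : Prop :=
  ∀ E' : V → V → Prop, Acyclic E' → MarkovEquiv E E' → Anc E' u v

/-- `u` is definite non-ancestral to `v` (`u ̸⇝ v`): `u` is not an ancestor of
`v` in any DAG Markov equivalent to `E`. -/
def DefNonAnc (E : V → V → Prop) (u v : V) : Prop :=
  ∀ E' : V → V → Prop, Acyclic E' → MarkovEquiv E E' → ¬ Anc E' u v

/-- The CPDAG of `E` has a directed edge `a → b` iff `a` and `b` are adjacent
and the edge is oriented `a → b` in every member of the Markov equivalence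
class of `E`. -/
def CPDAGDir (E : V → V → Prop) (a b : V) : Prop :=
  Adjacent E a b ∧ ∀ E' : V → V → Prop, Acyclic E' → MarkovEquiv E E' → E' a b

/-- A possibly directed path in the CPDAG of `E`: a path in the skeleton such
that no edge on it is directed backwards (as `x_{i+1} → x_i`) in the CPDAG. -/
def IsPossiblyDirectedPath (E : V → V → Prop) (p : List V) : Prop :=
  p.Nodup ∧ List.Chain' (fun a b => Adjacent E a b ∧ ¬ CPDAGDir E b a) p

/-- A path is unshielded if no three consecutive vertices on it are pairwise
adjacent. -/
def UnshieldedPath (E : V → V → Prop) (p : List V) : Prop :=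
  ∀ a x b : V, [a, x, b] <:+: p → ¬ Adjacent E a b

namespace IsDConnectingPath

variable {E : V → V → Prop} {C : Set V} {p : List V}

theorem of_infix {q : List V} (hdc : IsDConnectingPath E C p) (hqp : q <:+: p) :
    IsDConnectingPath E C q :=
  fun a x b h => hdc a x b (h.trans hqp)

theorem reverse (hdc : IsDConnectingPath E C p) : IsDConnectingPath E C p.reverse := by
  intro a x b h
  have hrev : [b, x, a] <:+: p := by simpa using List.reverse_infix.mpr h
  obtain ⟨hcollider, hnoncollider⟩ := hdc b x a hrev
  exact ⟨fun hax => hcollider hax.symm, fun hax => hnoncollider fun hbx => hax hbx.symm⟩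

/-- Following the edges forward from `x → b`, either every edge points towards the end `v`,
or the first edge pointing back creates a collider, which is an ancestor of `C`. -/
theorem anc_getLast_or_anc_mem_of_cons_cons {x b v : V} {rest : List V}
    (hchain : List.IsChain (Adjacent E) (x :: b :: rest))
    (hdc : IsDConnectingPath E C (x :: b :: rest))
    (hlast : (b :: rest).getLast? = some v) (hxb : E x b) :
    Anc E x v ∨ ∃ c ∈ C, Anc E x c := by
  induction rest generalizing x b with
  | nil =>
    obtain rfl : b = v := by simpa using hlast
    exact Or.inl (.single hxb)
  | cons c rest ih =>
    by_cases hcb : E c b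
    · have hcollider := (hdc x b c (List.prefix_append [x, b, c] rest).isInfix).1
      obtain ⟨w, hw, hbw⟩ := hcollider ⟨hxb, hcb⟩
      exact Or.inr ⟨w, hw, .head hxb hbw⟩
    · have hbc : E b c := (List.isChain_cons_cons.mp hchain.tail).1.resolve_right hcb
      have hsuf : b :: c :: rest <:+ x :: b :: c :: rest := List.suffix_cons x _
      rcases ih (hchain.suffix hsuf) (hdc.of_infix hsuf.isInfix) (by simpa using hlast) hbc
        with h | ⟨w, hw, hbw⟩
      · exact Or.inl (.head hxb h)
      · exact Or.inr ⟨w, hw, .head hxb hbw⟩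

theorem anc_getLast_or_anc_mem {x b v : V} (hchain : List.IsChain (Adjacent E) p)
    (hdc : IsDConnectingPath E C p) (hlast : p.getLast? = some v) (hxb_infix : [x, b] <:+: p)
    (hxb : E x b) : Anc E x v ∨ ∃ c ∈ C, Anc E x c := by
  obtain ⟨s, t, rfl⟩ := hxb_infix
  have hsuf : x :: b :: t <:+ s ++ [x, b] ++ t := ⟨s, by simp⟩
  refine anc_getLast_or_anc_mem_of_cons_cons (hchain.suffix hsuf) (hdc.of_infix hsuf.isInfix)
    ?_ hxb
  simpa [List.getLast?_append] using hlast

end IsDConnectingPath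

theorem stmt13_general (E : V → V → Prop) (u v : V) (W : Set V) (p : List V) (hp : IsPath E p)
    (hhead : p.head? = some u) (hlast : p.getLast? = some v)
    (hdc : IsDConnectingPath E W p)
    (x a b : V) (hmid : [a, x, b] <:+: p) (hnc : ¬ (E a x ∧ E b x)) :
    Anc E x u ∨ Anc E x v ∨ ∃ w ∈ W, Anc E x w := by
  have hadj : Adjacent E a x ∧ Adjacent E x b := by simpa using hp.2.infix hmid
  by_cases hbx : E b x
  · have hxa : E x a := hadj.1.resolve_left fun hax => hnc ⟨hax, hbx⟩
    have hrev_chain : List.IsChain (Adjacent E) p.reverse :=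
      List.isChain_reverse.mpr (hp.2.imp fun _ _ => Or.symm)
    have hxa_infix : [x, a] <:+: p.reverse :=
      (List.suffix_cons b [x, a]).isInfix.trans (by simpa using List.reverse_infix.mpr hmid)
    exact (hdc.reverse.anc_getLast_or_anc_mem hrev_chain (by simpa using hhead) hxa_infix
      hxa).imp_right Or.inr
  · have hxb : E x b := hadj.2.resolve_right hbx
    exact Or.inr (hdc.anc_getLast_or_anc_mem hp.2 hlast
      ((List.suffix_cons a [x, b]).isInfix.trans hmid) hxb)

/-- step of the proof of Lemma 2: any non-collider `x` on a
path that d-connects `u` and `v` given `W` is an ancestor of `u`, of `v`, or of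
some element of `W`. -/
theorem stmt13 [Fintype V] (E : V → V → Prop) (hE : Acyclic E) (u v : V) (huv : u ≠ v)
    (W : Set V) (hWu : u ∉ W) (hWv : v ∉ W)
    (p : List V) (hp : IsPath E p)
    (hhead : p.head? = some u) (hlast : p.getLast? = some v)
    (hdc : IsDConnectingPath E W p)
    (x a b : V) (hmid : [a, x, b] <:+: p) (hnc : ¬ (E a x ∧ E b x)) :
    Anc E x u ∨ Anc E x v ∨ ∃ w ∈ W, Anc E x w :=
  stmt13_general E u v W p hp hhead hlast hdc x a b hmid hnc
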